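/- arXiv:1312.0496 — 4 statements merged into one kernel-verified Lean document; each statement's English description precedes it below -/
import Mathlib

section
/- Let q ≥ 2, C, D, k be natural numbers and let g : Fin n → ℕ satisfy ∑_i g(i) ≤ C·n + D and, for each j ≤ C+1, the cardinality of {i : g(i) = j} is at most k·q^j. Then n ≤ D + ∑_{j=0}^{C+1} k·q^j·(C+1−j), and hence n ≤ D + 4·k·q^C. -/
theorem counting_lemma_chain (q C D k n : ℕ) (hq : 2 ≤ q) (g : Fin n → ℕ)
    (hsum : ∑ i, g i ≤ C * n + D)
    (hfib : ∀ j : ℕ, j ≤ C + 1 → (Finset.univ.filter (fun i => g i = j)).card ≤ k * q ^ j) :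
    n ≤ D + ∑ j ∈ Finset.range (C + 2), k * q ^ j * (C + 1 - j) ∧
      n ≤ D + 4 * k * q ^ C := by
  -- geometric bound
  have geo : ∀ m : ℕ, ∑ j ∈ Finset.range (m+1), q ^ j ≤ 2 * q ^ m := by
    intro m
    induction m with
    | zero => simp
    | succ m ih =>
      rw [Finset.sum_range_succ]
      have h1 : q ^ m * 2 ≤ q ^ m * q := Nat.mul_le_mul_left _ hq
      have h2 : q ^ (m+1) = q ^ m * q := pow_succ q m
      omega
  have Sbound : ∀ c : ℕ, ∑ j ∈ Finset.range (c+2), q ^ j * (c + 1 - j) ≤ 4 * q ^ c := by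
    intro c
    induction c with
    | zero => simp [Finset.sum_range_succ]
    | succ c ih =>
      have hrec : ∑ j ∈ Finset.range (c+3), q ^ j * (c + 2 - j)
          = ∑ j ∈ Finset.range (c+2), q ^ j * (c + 1 - j)
            + ∑ j ∈ Finset.range (c+2), q ^ j := by
        rw [Finset.sum_range_succ, ← Finset.sum_add_distrib]
        simp only [Nat.sub_self, mul_zero, add_zero]
        apply Finset.sum_congr rfl
        intro j hj
        simp only [Finset.mem_range] at hj
        have h : c + 2 - j = (c + 1 - j) + 1 := by omega
        rw [h, Nat.mul_add, mul_one]
      have hg : ∑ j ∈ Finset.range (c+2), q ^ j ≤ 2 * q ^ (c+1) := geo (c+1)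
      have h1 : q ^ c * 2 ≤ q ^ c * q := Nat.mul_le_mul_left _ hq
      have h2 : q ^ (c+1) = q ^ c * q := pow_succ q c
      show ∑ j ∈ Finset.range (c + 3), q ^ j * (c + 2 - j) ≤ 4 * q ^ (c + 1)
      omega
  -- first inequality: n ≤ D + ∑_i (C+1 - g i)
  have key : n ≤ D + ∑ i, (C + 1 - g i) := by
    have h1 : (C + 1) * n ≤ ∑ i, g i + ∑ i, (C + 1 - g i) := by
      rw [← Finset.sum_add_distrib]
      calc (C + 1) * n = ∑ _i : Fin n, (C + 1) := by
            simp [Finset.sum_const, Nat.mul_comm]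
        _ ≤ ∑ i, (g i + (C + 1 - g i)) := by
            apply Finset.sum_le_sum
            intro i _
            omega
    have := hsum
    nlinarith [h1]
  -- rewrite the middle sum fiberwise
  have hT : ∑ i, (C + 1 - g i) ≤ ∑ j ∈ Finset.range (C + 2), k * q ^ j * (C + 1 - j) := by
    have hsplit : ∑ i, (C + 1 - g i)
        = ∑ i ∈ Finset.univ.filter (fun i => g i ≤ C + 1), (C + 1 - g i) := by
      rw [Finset.sum_filter]
      apply Finset.sum_congr rfl
      intro i _
      by_cases h : g i ≤ C + 1 <;> simp [h] <;> omega
    rw [hsplit]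
    rw [← Finset.sum_fiberwise_of_maps_to (g := g) (t := Finset.range (C + 2))
        (fun i hi => by simp at hi ⊢; omega) (fun i => C + 1 - g i)]
    apply Finset.sum_le_sum
    intro j hj
    simp only [Finset.mem_range] at hj
    have hfj : ((Finset.univ.filter (fun i => g i ≤ C + 1)).filter (fun i => g i = j)).card
        ≤ k * q ^ j := by
      refine le_trans (Finset.card_le_card ?_) (hfib j (by omega))
      intro i hi
      simp only [Finset.mem_filter] at hi ⊢
      exact ⟨Finset.mem_univ i, hi.2⟩
    calc ∑ i ∈ (Finset.univ.filter (fun i => g i ≤ C + 1)).filter (fun i => g i = j),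
          (C + 1 - g i)
        = ∑ _i ∈ (Finset.univ.filter (fun i => g i ≤ C + 1)).filter (fun i => g i = j),
          (C + 1 - j) := by
          apply Finset.sum_congr rfl
          intro i hi
          simp only [Finset.mem_filter] at hi
          rw [hi.2]
      _ = ((Finset.univ.filter (fun i => g i ≤ C + 1)).filter (fun i => g i = j)).card
          * (C + 1 - j) := by rw [Finset.sum_const, smul_eq_mul]
      _ ≤ k * q ^ j * (C + 1 - j) := Nat.mul_le_mul_right _ hfj
  have first : n ≤ D + ∑ j ∈ Finset.range (C + 2), k * q ^ j * (C + 1 - j) := by omega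
  refine ⟨first, ?_⟩
  have hS : ∑ j ∈ Finset.range (C + 2), k * q ^ j * (C + 1 - j)
      ≤ 4 * k * q ^ C := by
    calc ∑ j ∈ Finset.range (C + 2), k * q ^ j * (C + 1 - j)
        = k * ∑ j ∈ Finset.range (C + 2), q ^ j * (C + 1 - j) := by
          rw [Finset.mul_sum]; apply Finset.sum_congr rfl; intro j _; ring
      _ ≤ k * (4 * q ^ C) := Nat.mul_le_mul_left _ (Sbound C)
      _ = 4 * k * q ^ C := by ring
  omega
end

section
/- Over a q-element alphabet with q ≥ 2, for any k and C, if a multiset of n 'sequences' (elements of the disjoint union ⋃_{j≥0} S^j for a set S of size q) has the property that each sequence of length j appears at most k times and the total of all lengths is at most C·n + D, then n ≤ D + 4·k·q^C. -/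
theorem crossing_sequence_counting (S : Type*) [Fintype S] [DecidableEq S]
    (q C D k n : ℕ) (hq : 2 ≤ q) (hcard : Fintype.card S = q)
    (F : Fin n → Σ j : ℕ, Fin j → S)
    (hsum : ∑ i, (F i).1 ≤ C * n + D)
    (hrep : ∀ s : Σ j : ℕ, Fin j → S, (Finset.univ.filter (fun i => F i = s)).card ≤ k) :
    n ≤ D + 4 * k * q ^ C := by
  -- geometric sum bound
  have geom : ∀ j : ℕ, ∑ t ∈ Finset.range (j + 1), q ^ t ≤ 2 * q ^ j := by
    intro j
    induction j with
    | zero => simp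
    | succ j ih =>
      rw [Finset.sum_range_succ]
      have h1 : 2 * q ^ j ≤ q ^ (j + 1) := by
        rw [pow_succ, Nat.mul_comm 2]
        exact Nat.mul_le_mul_left _ hq
      calc ∑ t ∈ Finset.range (j + 1), q ^ t + q ^ (j + 1)
          ≤ 2 * q ^ j + q ^ (j + 1) := by omega
        _ ≤ q ^ (j + 1) + q ^ (j + 1) := by omega
        _ = 2 * q ^ (j + 1) := by ring
  -- count of short sequences
  have short : ∀ j : ℕ,
      (Finset.univ.filter fun i => (F i).1 ≤ j).card ≤ k * ∑ t ∈ Finset.range (j + 1), q ^ t := by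
    intro j
    set A := Finset.univ.filter fun i : Fin n => (F i).1 ≤ j with hA
    have h1 : A.card ≤ k * (A.image F).card := by
      apply Finset.card_le_mul_card_image
      intro a _
      refine le_trans (Finset.card_le_card ?_) (hrep a)
      intro x hx
      simp only [Finset.mem_filter] at hx ⊢
      exact ⟨Finset.mem_univ x, hx.2⟩
    have h2 : (A.image F).card ≤ Fintype.card (Σ t : Fin (j + 1), Fin (t : ℕ) → S) := by
      classical
      apply Finset.card_le_card_of_injOn
        (fun s : Σ j' : ℕ, Fin j' → S =>
          if h : s.1 < j + 1 then (⟨⟨s.1, h⟩, s.2⟩ : Σ t : Fin (j + 1), Fin (t : ℕ) → S)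
          else ⟨⟨0, Nat.succ_pos j⟩, Fin.elim0⟩)
      · intro a _; exact Finset.mem_univ _
      · intro a ha b hb hab
        simp only [Finset.coe_image, Set.mem_image, Finset.mem_coe, hA,
          Finset.mem_filter, Finset.mem_univ, true_and] at ha hb
        obtain ⟨i, hi, rfl⟩ := ha
        obtain ⟨i', hi', rfl⟩ := hb
        have hia : (F i).1 < j + 1 := Nat.lt_succ_of_le hi
        have hib : (F i').1 < j + 1 := Nat.lt_succ_of_le hi'
        simp only at hab
        rw [dif_pos hia, dif_pos hib] at hab
        obtain ⟨h1, h2⟩ := Sigma.mk.inj_iff.mp hab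
        have hfst : (F i).1 = (F i').1 := congrArg Fin.val h1
        exact Sigma.ext hfst h2
    have h3 : Fintype.card (Σ t : Fin (j + 1), Fin (t : ℕ) → S)
        = ∑ t ∈ Finset.range (j + 1), q ^ t := by
      rw [Fintype.card_sigma]
      rw [← Fin.sum_univ_eq_sum_range (fun t => q ^ t) (j + 1)]
      congr 1
      ext t
      rw [Fintype.card_fun, hcard, Fintype.card_fin]
    calc A.card ≤ k * (A.image F).card := h1
      _ ≤ k * ∑ t ∈ Finset.range (j + 1), q ^ t := by
          apply Nat.mul_le_mul_left
          rw [← h3]; exact h2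
  -- for each j, n ≤ #{long} + k * geom
  have key : ∀ j : ℕ,
      n ≤ (Finset.univ.filter fun i => j < (F i).1).card + k * ∑ t ∈ Finset.range (j + 1), q ^ t := by
    intro j
    have hsplit : (Finset.univ.filter fun i => j < (F i).1).card
        + (Finset.univ.filter fun i => ¬ j < (F i).1).card = n := by
      rw [Finset.card_filter_add_card_filter_not]
      simp
    have : (Finset.univ.filter fun i => ¬ j < (F i).1).card
        ≤ k * ∑ t ∈ Finset.range (j + 1), q ^ t := by
      have heq : (Finset.univ.filter fun i : Fin n => ¬ j < (F i).1)
          = Finset.univ.filter fun i => (F i).1 ≤ j := by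
        apply Finset.filter_congr
        intro i _
        simp [Nat.not_lt]
      rw [heq]; exact short j
    omega
  -- sum key over j in range (C+1)
  have hsum2 : (C + 1) * n ≤ ∑ i, (F i).1 + k * (4 * q ^ C) := by
    have hlhs : (C + 1) * n = ∑ _j ∈ Finset.range (C + 1), n := by
      simp [Finset.sum_const, Nat.mul_comm]
    have step1 : ∑ _j ∈ Finset.range (C + 1), n
        ≤ ∑ j ∈ Finset.range (C + 1), ((Finset.univ.filter fun i => j < (F i).1).card
            + k * ∑ t ∈ Finset.range (j + 1), q ^ t) :=
      Finset.sum_le_sum fun j _ => key j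
    have step2 : ∑ j ∈ Finset.range (C + 1), (Finset.univ.filter fun i : Fin n => j < (F i).1).card
        ≤ ∑ i, (F i).1 := by
      calc ∑ j ∈ Finset.range (C + 1), (Finset.univ.filter fun i : Fin n => j < (F i).1).card
          = ∑ j ∈ Finset.range (C + 1), ∑ i : Fin n, if j < (F i).1 then 1 else 0 := by
            simp only [Finset.card_filter]
        _ = ∑ i : Fin n, ∑ j ∈ Finset.range (C + 1), if j < (F i).1 then 1 else 0 :=
            Finset.sum_comm
        _ ≤ ∑ i, (F i).1 := by
            apply Finset.sum_le_sum
            intro i _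
            have : (∑ j ∈ Finset.range (C + 1), if j < (F i).1 then 1 else 0)
                = ((Finset.range (C + 1)).filter fun j => j < (F i).1).card := by
              rw [Finset.card_filter]
            rw [this]
            calc ((Finset.range (C + 1)).filter fun j => j < (F i).1).card
                ≤ (Finset.range (F i).1).card := by
                  apply Finset.card_le_card
                  intro x hx
                  simp only [Finset.mem_filter, Finset.mem_range] at hx ⊢
                  exact hx.2
              _ = (F i).1 := Finset.card_range _
    have step3 : ∑ j ∈ Finset.range (C + 1), (k * ∑ t ∈ Finset.range (j + 1), q ^ t)
        ≤ k * (4 * q ^ C) := by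
      calc ∑ j ∈ Finset.range (C + 1), (k * ∑ t ∈ Finset.range (j + 1), q ^ t)
          ≤ ∑ j ∈ Finset.range (C + 1), k * (2 * q ^ j) :=
            Finset.sum_le_sum fun j _ => Nat.mul_le_mul_left _ (geom j)
        _ = 2 * k * ∑ j ∈ Finset.range (C + 1), q ^ j := by
            rw [Finset.mul_sum]; congr 1; ext j; ring
        _ ≤ 2 * k * (2 * q ^ C) := Nat.mul_le_mul_left _ (geom C)
        _ = k * (4 * q ^ C) := by ring
    calc (C + 1) * n = ∑ _j ∈ Finset.range (C + 1), n := hlhs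
      _ ≤ ∑ j ∈ Finset.range (C + 1), ((Finset.univ.filter fun i => j < (F i).1).card
            + k * ∑ t ∈ Finset.range (j + 1), q ^ t) := step1
      _ = ∑ j ∈ Finset.range (C + 1), (Finset.univ.filter fun i : Fin n => j < (F i).1).card
            + ∑ j ∈ Finset.range (C + 1), (k * ∑ t ∈ Finset.range (j + 1), q ^ t) :=
          Finset.sum_add_distrib
      _ ≤ ∑ i, (F i).1 + k * (4 * q ^ C) := Nat.add_le_add step2 step3
  have : C * n + n ≤ C * n + (D + 4 * k * q ^ C) := by
    have h := le_trans hsum2 (Nat.add_le_add_right hsum _)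
    calc C * n + n = (C + 1) * n := by ring
      _ ≤ C * n + D + k * (4 * q ^ C) := h
      _ = C * n + (D + 4 * k * q ^ C) := by ring
  exact Nat.le_of_add_le_add_left this
end

section
/- If a function g : Fin n → ℕ (with q ≥ 2) satisfies ∑_i g(i) ≤ C·n + D and for every value j the set {i : g(i) = j} satisfies |{i : g(i) = j}| ≤ 2·q^j, then n ≤ D + 8·q^C. -/
open Finset

lemma geom_le_aux (q : ℕ) (hq : 2 ≤ q) : ∀ C, ∑ j ∈ range (C+1), q^j ≤ 2*q^C := by
  intro C
  induction C with
  | zero => simp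
  | succ C ih =>
    rw [Finset.sum_range_succ]
    have h1 : q^(C+1) = q^C * q := pow_succ q C
    have h2 : 0 < q^C := pow_pos (by omega) C
    nlinarith

lemma geom2_le_aux (q : ℕ) (hq : 2 ≤ q) : ∀ C, ∑ j ∈ range (C+1), (C - j) * q^j ≤ 2*q^C := by
  intro C
  induction C with
  | zero => simp
  | succ C ih =>
    rw [Finset.sum_range_succ]
    have hcongr : ∑ j ∈ range (C+1), (C + 1 - j) * q^j
        = ∑ j ∈ range (C+1), ((C - j) * q^j + q^j) := by
      refine Finset.sum_congr rfl (fun j hj => ?_)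
      have : j ≤ C := by simpa [Nat.lt_succ_iff] using (Finset.mem_range.mp hj)
      have : C + 1 - j = (C - j) + 1 := by omega
      rw [this]; ring
    rw [hcongr, Finset.sum_add_distrib]
    have h3 := geom_le_aux q hq C
    have h1 : q^(C+1) = q^C * q := pow_succ q C
    have h2 : 0 < q^C := pow_pos (by omega) C
    simp only [Nat.sub_self, zero_mul, add_zero]
    nlinarith

theorem counting_lemma_two (q C D n : ℕ) (hq : 2 ≤ q) (g : Fin n → ℕ)
    (hsum : ∑ i, g i ≤ C * n + D)
    (hfib : ∀ j : ℕ, (Finset.univ.filter (fun i => g i = j)).card ≤ 2 * q ^ j) :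
    n ≤ D + 8 * q ^ C := by
  classical
  set A := Finset.univ.filter (fun i : Fin n => g i ≤ C) with hA
  set B := Finset.univ.filter (fun i : Fin n => ¬ g i ≤ C) with hB
  have hcard : A.card + B.card = n := by
    rw [hA, hB, Finset.card_filter_add_card_filter_not, Finset.card_univ,
      Fintype.card_fin]
  -- |A| ≤ 4 q^C
  have hAsub : A ⊆ (range (C+1)).biUnion
      (fun j => Finset.univ.filter (fun i => g i = j)) := by
    intro i hi
    simp only [hA, mem_filter, mem_univ, true_and] at hi
    simp only [mem_biUnion, mem_range, mem_filter, mem_univ, true_and]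
    exact ⟨g i, by omega, rfl⟩
  have hAcard : A.card ≤ 4 * q ^ C := by
    calc A.card ≤ ((range (C+1)).biUnion
          (fun j => Finset.univ.filter (fun i => g i = j))).card :=
            Finset.card_le_card hAsub
      _ ≤ ∑ j ∈ range (C+1), (Finset.univ.filter (fun i => g i = j)).card :=
            Finset.card_biUnion_le
      _ ≤ ∑ j ∈ range (C+1), 2 * q ^ j := Finset.sum_le_sum (fun j _ => hfib j)
      _ = 2 * ∑ j ∈ range (C+1), q ^ j := by rw [Finset.mul_sum]
      _ ≤ 2 * (2 * q ^ C) := by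
            have := geom_le_aux q hq C
            omega
      _ = 4 * q ^ C := by ring
  -- ∑_{i ∈ A} (C - g i) ≤ 4 q^C
  have hTA : ∑ i ∈ A, (C - g i) ≤ 4 * q ^ C := by
    have hmaps : ∀ i ∈ A, g i ∈ range (C+1) := by
      intro i hi
      simp only [hA, mem_filter, mem_univ, true_and] at hi
      simp only [mem_range]; omega
    rw [← Finset.sum_fiberwise_of_maps_to hmaps]
    calc ∑ j ∈ range (C+1), ∑ i ∈ A.filter (fun i => g i = j), (C - g i)
        = ∑ j ∈ range (C+1), (C - j) * (A.filter (fun i => g i = j)).card := by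
          refine Finset.sum_congr rfl (fun j _ => ?_)
          rw [Finset.sum_congr rfl (fun i hi => ?_), Finset.sum_const, smul_eq_mul, mul_comm]
          simp only [mem_filter] at hi
          rw [hi.2]
      _ ≤ ∑ j ∈ range (C+1), (C - j) * (2 * q ^ j) := by
          refine Finset.sum_le_sum (fun j _ => ?_)
          refine Nat.mul_le_mul_left _ ?_
          refine le_trans (Finset.card_le_card ?_) (hfib j)
          intro i hi
          simp only [mem_filter, mem_univ, true_and] at hi ⊢
          exact hi.2
      _ = 2 * ∑ j ∈ range (C+1), (C - j) * q ^ j := by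
          rw [Finset.mul_sum]
          exact Finset.sum_congr rfl (fun j _ => by ring)
      _ ≤ 2 * (2 * q ^ C) := by
          have := geom2_le_aux q hq C
          omega
      _ = 4 * q ^ C := by ring
  -- algebraic identities
  have h1 : ∑ i ∈ A, g i + ∑ i ∈ A, (C - g i) = C * A.card := by
    rw [← Finset.sum_add_distrib]
    have : ∀ i ∈ A, g i + (C - g i) = C := by
      intro i hi
      simp only [hA, mem_filter, mem_univ, true_and] at hi
      omega
    rw [Finset.sum_congr rfl this, Finset.sum_const, smul_eq_mul, mul_comm]
  have h2 : ∑ i ∈ B, g i = ∑ i ∈ B, (g i - C) + C * B.card := by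
    have : ∀ i ∈ B, g i = (g i - C) + C := by
      intro i hi
      simp only [hB, mem_filter, mem_univ, true_and, not_le] at hi
      omega
    rw [Finset.sum_congr rfl this, Finset.sum_add_distrib, Finset.sum_const, smul_eq_mul,
      mul_comm]
  have h3 : B.card ≤ ∑ i ∈ B, (g i - C) := by
    calc B.card = ∑ _i ∈ B, 1 := by simp
      _ ≤ ∑ i ∈ B, (g i - C) := by
          refine Finset.sum_le_sum (fun i hi => ?_)
          simp only [hB, mem_filter, mem_univ, true_and, not_le] at hi
          omega
  have hsplit : ∑ i ∈ A, g i + ∑ i ∈ B, g i = ∑ i, g i := by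
    rw [hA, hB]
    exact Finset.sum_filter_add_sum_filter_not _ _ _
  have hn : C * (A.card + B.card) = C * A.card + C * B.card := Nat.mul_add C _ _
  rw [hcard] at hn
  rw [hn] at hsum
  set p1 := C * A.card with hp1
  set p2 := C * B.card with hp2
  set Q := q ^ C with hQ
  omega
end

section
/- If a function g : Fin n → ℕ satisfies ∑_i g(i) ≤ C·n + D and for every value j, |{i : g(i) = j}| ≤ 3·q^j (with q ≥ 2), then n ≤ D + 12·q^C. -/
theorem counting_lemma_three (q C D n : ℕ) (hq : 2 ≤ q) (g : Fin n → ℕ)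
    (hsum : ∑ i, g i ≤ C * n + D)
    (hfib : ∀ j : ℕ, (Finset.univ.filter (fun i => g i = j)).card ≤ 3 * q ^ j) :
    n ≤ D + 12 * q ^ C := by
  classical
  have hgeo : ∀ t : ℕ, ∑ j ∈ Finset.range (t + 1), q ^ j ≤ 2 * q ^ t := by
    intro t
    induction t with
    | zero => simp
    | succ t ih =>
      rw [Finset.sum_range_succ]
      have h1 : 2 * q ^ t ≤ q ^ (t + 1) := by
        rw [pow_succ]
        calc 2 * q ^ t = q ^ t * 2 := by ring
          _ ≤ q ^ t * q := Nat.mul_le_mul_left _ hq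
      calc ∑ j ∈ Finset.range (t + 1), q ^ j + q ^ (t + 1)
          ≤ q ^ (t + 1) + q ^ (t + 1) := by
            exact Nat.add_le_add_right (le_trans ih h1) _
        _ = 2 * q ^ (t + 1) := by ring
  have hsmall : ∀ t : ℕ,
      (Finset.univ.filter (fun i => g i ≤ t)).card ≤ 6 * q ^ t := by
    intro t
    have hsub : Finset.univ.filter (fun i => g i ≤ t) ⊆
        (Finset.range (t + 1)).biUnion
          (fun j => Finset.univ.filter (fun i => g i = j)) := by
      intro i hi
      simp only [Finset.mem_filter, Finset.mem_univ, true_and] at hi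
      simp only [Finset.mem_biUnion, Finset.mem_range, Finset.mem_filter,
        Finset.mem_univ, true_and]
      exact ⟨g i, Nat.lt_succ_of_le hi, rfl⟩
    calc (Finset.univ.filter (fun i => g i ≤ t)).card
        ≤ ((Finset.range (t + 1)).biUnion
            (fun j => Finset.univ.filter (fun i => g i = j))).card :=
          Finset.card_le_card hsub
      _ ≤ ∑ j ∈ Finset.range (t + 1),
            (Finset.univ.filter (fun i => g i = j)).card :=
          Finset.card_biUnion_le
      _ ≤ ∑ j ∈ Finset.range (t + 1), 3 * q ^ j :=
          Finset.sum_le_sum (fun j _ => hfib j)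
      _ = 3 * ∑ j ∈ Finset.range (t + 1), q ^ j := by rw [Finset.mul_sum]
      _ ≤ 3 * (2 * q ^ t) := Nat.mul_le_mul_left _ (hgeo t)
      _ = 6 * q ^ t := by ring
  -- double counting
  have hdc : ∑ t ∈ Finset.range (C + 1),
      (Finset.univ.filter (fun i => t < g i)).card ≤ ∑ i, g i := by
    have hswap : ∑ t ∈ Finset.range (C + 1),
        (Finset.univ.filter (fun i => t < g i)).card
        = ∑ i : Fin n, ((Finset.range (C + 1)).filter (fun t => t < g i)).card := by
      simp only [Finset.card_filter]
      exact Finset.sum_comm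
    rw [hswap]
    apply Finset.sum_le_sum
    intro i _
    calc ((Finset.range (C + 1)).filter (fun t => t < g i)).card
        ≤ (Finset.range (g i)).card := by
          apply Finset.card_le_card
          intro t ht
          simp only [Finset.mem_filter, Finset.mem_range] at ht ⊢
          exact ht.2
      _ = g i := Finset.card_range _
  have hlow : ∀ t ∈ Finset.range (C + 1),
      n ≤ (Finset.univ.filter (fun i => t < g i)).card + 6 * q ^ t := by
    intro t _
    have h2 : (Finset.univ.filter (fun i => t < g i)).card
        + (Finset.univ.filter (fun i => ¬ t < g i)).card = n := by
      rw [Finset.card_filter_add_card_filter_not]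
      simp
    have h3 : (Finset.univ.filter (fun i => ¬ t < g i)).card
        = (Finset.univ.filter (fun i => g i ≤ t)).card := by
      congr 1
      apply Finset.filter_congr
      intro i _
      simp [Nat.not_lt]
    have h4 := hsmall t
    omega
  have hmain : (C + 1) * n ≤ C * n + D + 12 * q ^ C := by
    calc (C + 1) * n = ∑ _t ∈ Finset.range (C + 1), n := by
          rw [Finset.sum_const, Finset.card_range, smul_eq_mul]
      _ ≤ ∑ t ∈ Finset.range (C + 1),
            ((Finset.univ.filter (fun i => t < g i)).card + 6 * q ^ t) :=
          Finset.sum_le_sum hlow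
      _ = (∑ t ∈ Finset.range (C + 1),
            (Finset.univ.filter (fun i => t < g i)).card)
          + ∑ t ∈ Finset.range (C + 1), 6 * q ^ t := Finset.sum_add_distrib
      _ ≤ (∑ i, g i) + 6 * ∑ t ∈ Finset.range (C + 1), q ^ t := by
          rw [Finset.mul_sum]
          exact Nat.add_le_add hdc le_rfl
      _ ≤ (C * n + D) + 6 * (2 * q ^ C) :=
          Nat.add_le_add hsum (Nat.mul_le_mul_left _ (hgeo C))
      _ = C * n + D + 12 * q ^ C := by ring
  have hexp : (C + 1) * n = C * n + n := by ring
  omega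
end
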